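/- Let M be a connected open n-manifold. Then every clean neighborhood of infinity in M × ℝ is finitely dominated if and only if M is finitely dominated. -/

import Mathlib

open scoped unitInterval
open CategoryTheory

noncomputable section

/-- `M` is an open `n`-manifold: a noncompact, Hausdorff, second-countable space in which
every point has an open neighborhood homeomorphic to `ℝⁿ`. -/
def IsOpenNManifold (n : ℕ) (M : Type) [TopologicalSpace M] : Prop :=
  T2Space M ∧ SecondCountableTopology M ∧ ¬ CompactSpace M ∧
    ∀ x : M, ∃ U : Set M, IsOpen U ∧ x ∈ U ∧ Nonempty (U ≃ₜ (Fin n → ℝ))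

/-- `X` is finitely dominated: there is a homotopy `H : X × [0,1] → X` starting at the identity
whose time-one image has compact closure. -/
def FinitelyDominated (X : Type) [TopologicalSpace X] : Prop :=
  ∃ H : C(X × I, X), (∀ x, H (x, 0) = x) ∧
    IsCompact (closure (Set.range fun x => H (x, 1)))

/-- `X` has the homotopy type of a finite complex: it is homotopy equivalent to a compact
polyhedron, i.e. a finite union of simplices (convex hulls of finite sets) in some `ℝᴺ`. -/
def FiniteHomotopyType (X : Type) [TopologicalSpace X] : Prop :=
  ∃ (N : ℕ) (S : Finset (Finset (Fin N → ℝ))),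
    Nonempty (ContinuousMap.HomotopyEquiv X
      (⋃ s ∈ S, convexHull ℝ (s : Set (Fin N → ℝ)) : Set (Fin N → ℝ)))

/-- `N` is a clean neighborhood of infinity in `X`: `N` is closed, the closure of its complement
is compact, and its topological frontier is bicollared in `X`. -/
def IsCleanNbhdOfInf {X : Type} [TopologicalSpace X] (N : Set X) : Prop :=
  IsClosed N ∧ IsCompact (closure Nᶜ) ∧
    ∃ (U : Set X) (e : (frontier N × Set.Ioo (-1 : ℝ) 1) ≃ₜ U),
      IsOpen U ∧ frontier N ⊆ U ∧
      (∀ x : frontier N, (e (x, ⟨0, by norm_num⟩) : X) = (x : X)) ∧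
      ((fun z => ((e z : X))) '' {z : frontier N × Set.Ioo (-1 : ℝ) 1 | 0 ≤ (z.2 : ℝ)}
        = U ∩ N)

/-- `X` is one-ended: it is noncompact and every compact set is contained in a compact set
with connected complement. -/
def OneEnded (X : Type) [TopologicalSpace X] : Prop :=
  ¬ CompactSpace X ∧ ∀ K : Set X, IsCompact K →
    ∃ K' : Set X, IsCompact K' ∧ K ⊆ K' ∧ IsConnected K'ᶜ

/-- The neighborhood of infinity `W(N,m) = (N × ℝ) ∪ (M × ((−∞,−m] ∪ [m,∞)))` in `M × ℝ`. -/
def WSet {M : Type} (N : Set M) (m : ℝ) : Set (M × ℝ) :=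
  (N ×ˢ Set.univ) ∪ (Set.univ ×ˢ (Set.Iic (-m) ∪ Set.Ici m))

/-- The subset `W⁺(N,m) = (N × ℝ) ∪ (M × [m,∞))` of `M × ℝ`. -/
def WPlusSet {M : Type} (N : Set M) (m : ℝ) : Set (M × ℝ) :=
  (N ×ˢ Set.univ) ∪ (Set.univ ×ˢ Set.Ici m)

/-- If `Q ⊆ P` and `m ≤ m'` then `W(Q,m') ⊆ W(P,m)`. -/
theorem WSet_mono {M : Type} {P Q : Set M} (h : Q ⊆ P) {m m' : ℝ} (hm : m ≤ m') :
    WSet Q m' ⊆ WSet P m := by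
  rintro ⟨x, t⟩ (⟨hx, -⟩ | ⟨-, ht⟩)
  · exact Or.inl ⟨h hx, Set.mem_univ _⟩
  · refine Or.inr ⟨Set.mem_univ _, ?_⟩
    rcases ht with ht | ht
    · simp only [Set.mem_Iic] at ht ⊢
      exact Or.inl (Set.mem_Iic.mpr (by linarith))
    · simp only [Set.mem_Ici] at ht ⊢
      exact Or.inr (Set.mem_Ici.mpr (by linarith))

/-- The inclusion between subspaces, as a continuous map. -/
def inclCM {X : Type} [TopologicalSpace X] {S T : Set X} (h : S ⊆ T) : C(S, T) :=
  ⟨Set.inclusion h, continuous_inclusion h⟩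

/-- The inclusion of a subspace into the ambient space, as a continuous map. -/
def valCM {X : Type} [TopologicalSpace X] (S : Set X) : C(S, X) :=
  ⟨Subtype.val, continuous_subtype_val⟩

/-- The homomorphism of fundamental groups induced by a continuous map. -/
def indHom {X Y : Type} [TopologicalSpace X] [TopologicalSpace Y]
    (f : C(X, Y)) (x : X) : FundamentalGroup X x →* FundamentalGroup Y (f x) :=
  CategoryTheory.Functor.mapEnd _
    (FundamentalGroupoid.fundamentalGroupoidFunctor.map (X := TopCat.of X) (Y := TopCat.of Y) (TopCat.ofHom f))

/-- The change-of-basepoint isomorphism `π₁(X,q) ≃* π₁(X,p)` determined by a path `α` from `p`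
to `q`; it sends the class of a loop `τ` to the class of `α ∗ τ ∗ α⁻¹`. -/
def basepointChange {X : Type} [TopologicalSpace X] {p q : X} (α : Path p q) :
    FundamentalGroup X q ≃* FundamentalGroup X p :=
  (FundamentalGroup.fundamentalGroupMulEquivOfPath α).symm

/-- The path `α × {0}` in a subset `S` of `M × ℝ` determined by a path `α` in `M`. -/
def pathZeroIn {M : Type} [TopologicalSpace M] {p q : M} (α : Path p q)
    {S : Set (M × ℝ)} (h : ∀ t : I, ((α t : M), (0 : ℝ)) ∈ S) :
    Path (⟨(p, 0), by simpa using h 0⟩ : S) (⟨(q, 0), by simpa using h 1⟩ : S) where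
  toFun t := ⟨(α t, 0), h t⟩
  continuous_toFun := ((α.continuous.prodMk continuous_const)).subtype_mk _
  source' := Subtype.ext (by simp)
  target' := Subtype.ext (by simp)




/-- Any function from an empty space is continuous. -/
lemma continuous_of_isEmpty' {α β : Type*} [TopologicalSpace α] [TopologicalSpace β] [IsEmpty α]
    (f : α → β) : Continuous f := by
  refine continuous_def.2 fun s _ => ?_
  rw [Set.eq_empty_of_isEmpty (f ⁻¹' s)]
  exact isOpen_empty

lemma weaklyLC_of_charts {n : ℕ} {M : Type} [TopologicalSpace M]
    (h : ∀ x : M, ∃ U : Set M, IsOpen U ∧ x ∈ U ∧ Nonempty (U ≃ₜ (Fin n → ℝ))) :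
    WeaklyLocallyCompactSpace M := by
  constructor
  intro x
  obtain ⟨U, hU, hxU, ⟨e⟩⟩ := h x
  haveI : LocallyCompactSpace ↥U := e.locallyCompactSpace_iff.mpr inferInstance
  obtain ⟨K, hK, hKn⟩ := exists_compact_mem_nhds (⟨x, hxU⟩ : U)
  have hmap := hU.isOpenEmbedding_subtypeVal.map_nhds_eq (⟨x, hxU⟩ : U)
  refine ⟨Subtype.val '' K, hK.image continuous_subtype_val, ?_⟩
  have : Subtype.val '' K ∈ Filter.map (Subtype.val : U → M) (nhds (⟨x, hxU⟩ : U)) :=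
    Filter.image_mem_map hKn
  rwa [hmap] at this

/-- The cut-off function `ψ`. -/
def nbPsi (m : ℝ) (t : ℝ) : I := Set.projIcc 0 1 zero_le_one (|t| - (m + 1))

lemma continuous_nbPsi (m : ℝ) : Continuous (nbPsi m) :=
  continuous_projIcc.comp (continuous_abs.sub continuous_const)

lemma nbPsi_of_le {m t : ℝ} (ht : |t| ≤ m + 1) : nbPsi m t = 0 := by
  rw [nbPsi, Set.projIcc_of_le_left _ (by linarith)]
  exact Subtype.ext rfl

lemma nbPsi_of_ge {m t : ℝ} (ht : m + 2 ≤ |t|) : nbPsi m t = 1 := by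
  rw [nbPsi, Set.projIcc_of_right_le _ (by linarith)]
  exact Subtype.ext rfl

variable {M : Type} [TopologicalSpace M]

/-- first-stage new `t` coordinate. -/
def nbT1 (φ : C(M, ℝ)) (m : ℝ) (x : M) (t : ℝ) (s : I) : ℝ :=
  t + (s : ℝ) * φ x * max 0 (m + 2 - t)

/-- the time used in the `M`-direction homotopy. -/
def nbSigma (φ : C(M, ℝ)) (m : ℝ) (x : M) (t : ℝ) (s : I) : I :=
  ⟨(s : ℝ) * (nbPsi m (nbT1 φ m x t s) : ℝ),
    unitInterval.mul_mem s.2 (nbPsi m (nbT1 φ m x t s)).2⟩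

/-- final `t` coordinate. -/
def nbT3 (φ : C(M, ℝ)) (m : ℝ) (x : M) (t : ℝ) (s : I) : ℝ :=
  (1 - (s : ℝ)) * nbT1 φ m x t s +
    (s : ℝ) * max (-(m + 2)) (min (nbT1 φ m x t s) (m + 2))

/-- the full self-map of `M × ℝ`. -/
def nbG (h : C(M × I, M)) (φ : C(M, ℝ)) (m : ℝ) (p : (M × ℝ) × I) : M × ℝ :=
  (h (p.1.1, nbSigma φ m p.1.1 p.1.2 p.2), nbT3 φ m p.1.1 p.1.2 p.2)

lemma continuous_nbG (h : C(M × I, M)) (φ : C(M, ℝ)) (m : ℝ) :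
    Continuous (nbG h φ m) := by
  have cx : Continuous fun p : (M × ℝ) × I => p.1.1 := continuous_fst.fst
  have ct : Continuous fun p : (M × ℝ) × I => p.1.2 := continuous_fst.snd
  have cs : Continuous fun p : (M × ℝ) × I => ((p.2 : I) : ℝ) :=
    continuous_subtype_val.comp continuous_snd
  have ct1 : Continuous fun p : (M × ℝ) × I => nbT1 φ m p.1.1 p.1.2 p.2 :=
    ct.add ((cs.mul (φ.continuous.comp cx)).mul
      (continuous_const.max (continuous_const.sub ct)))
  have cσ : Continuous fun p : (M × ℝ) × I => nbSigma φ m p.1.1 p.1.2 p.2 :=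
    (cs.mul (continuous_subtype_val.comp ((continuous_nbPsi m).comp ct1))).subtype_mk _
  have ct3 : Continuous fun p : (M × ℝ) × I => nbT3 φ m p.1.1 p.1.2 p.2 :=
    ((continuous_const.sub cs).mul ct1).add
      (cs.mul (continuous_const.max (ct1.min continuous_const)))
  exact (h.continuous.comp (cx.prodMk cσ)).prodMk ct3

lemma nbG_zero (h : C(M × I, M)) (hh0 : ∀ x, h (x, 0) = x) (φ : C(M, ℝ)) (m : ℝ)
    (z : M × ℝ) : nbG h φ m (z, 0) = z := by
  have h0 : ((0 : I) : ℝ) = 0 := rfl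
  have ht1 : nbT1 φ m z.1 z.2 0 = z.2 := by simp [nbT1, h0]
  have hσ : nbSigma φ m z.1 z.2 0 = 0 := Subtype.ext (by simp [nbSigma, h0])
  have ht3 : nbT3 φ m z.1 z.2 0 = z.2 := by simp [nbT3, h0, ht1]
  show (h (z.1, nbSigma φ m z.1 z.2 0), nbT3 φ m z.1 z.2 0) = z
  rw [hσ, ht3, hh0]

theorem finitelyDominated_of_clean {M : Type} [TopologicalSpace M] [T2Space M]
    [WeaklyLocallyCompactSpace M]
    (hFD : FinitelyDominated M) (N : Set (M × ℝ)) (hNcl : IsClosed N)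
    (hA : IsCompact (closure Nᶜ)) : FinitelyDominated ↥N := by
  obtain ⟨h, hh0, hL⟩ := hFD
  set L := closure (Set.range fun x => h (x, 1)) with hLdef
  -- bound the ℝ-extent of the complement
  obtain ⟨m, hm0, hmA⟩ : ∃ m : ℝ, 0 ≤ m ∧ ∀ p ∈ closure Nᶜ, |p.2| ≤ m := by
    obtain ⟨r, hr⟩ := (hA.image continuous_snd).isBounded.subset_closedBall 0
    refine ⟨max r 0, le_max_right _ _, fun p hp => ?_⟩
    have h2 := hr (Set.mem_image_of_mem _ hp)
    rw [Metric.mem_closedBall, Real.dist_eq, sub_zero] at h2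
    exact le_trans h2 (le_max_left _ _)
  set C := Prod.fst '' closure Nᶜ with hCdef
  have hC : IsCompact C := hA.image continuous_fst
  have key : ∀ (y : M) (t : ℝ), (y ∉ C ∨ m < |t|) → (y, t) ∈ N := by
    intro y t hyt
    by_contra hmem
    have hmem' : (y, t) ∈ closure Nᶜ := subset_closure hmem
    rcases hyt with hy | ht
    · exact hy ⟨(y, t), hmem', rfl⟩
    · exact absurd (hmA _ hmem') (not_le.2 ht)
  obtain ⟨K', hK', hCK'⟩ := exists_compact_superset hC
  obtain ⟨φ, hφ0, hφ1, hφ01⟩ := exists_continuous_zero_one_of_isCompact hC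
    isOpen_interior.isClosed_compl (Set.disjoint_left.2 fun x hx hx2 => hx2 (hCK' hx))
  -- membership of the homotopy in N
  have hmem1 : ∀ (x : M) (t : ℝ) (s : I), (x, t) ∈ N → (x, nbT1 φ m x t s) ∈ N := by
    intro x t s hxt
    by_cases hx : φ x = 0
    · have : nbT1 φ m x t s = t := by simp [nbT1, hx]
      rwa [this]
    · refine key _ _ (Or.inl fun hxC => hx ?_)
      simpa using hφ0 hxC
  have hmem2 : ∀ (x : M) (t : ℝ) (s : I), (x, t) ∈ N →
      (h (x, nbSigma φ m x t s), nbT1 φ m x t s) ∈ N := by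
    intro x t s hxt
    by_cases hσ : nbSigma φ m x t s = 0
    · rw [hσ, hh0]
      exact hmem1 x t s hxt
    · refine key _ _ (Or.inr ?_)
      by_contra hle
      push_neg at hle
      apply hσ
      apply Subtype.ext
      show (s : ℝ) * (nbPsi m (nbT1 φ m x t s) : ℝ) = 0
      rw [nbPsi_of_le (by linarith)]
      simp
  have hmem3 : ∀ (x : M) (t : ℝ) (s : I), (x, t) ∈ N → nbG h φ m ((x, t), s) ∈ N := by
    intro x t s hxt
    have hs0 := s.2.1
    have hs1 := s.2.2
    show (h (x, nbSigma φ m x t s), nbT3 φ m x t s) ∈ N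
    rcases le_or_gt (nbT1 φ m x t s) (m + 2) with h1 | h1
    · rcases le_or_gt (-(m + 2)) (nbT1 φ m x t s) with h2 | h2
      · have : nbT3 φ m x t s = nbT1 φ m x t s := by
          rw [nbT3, min_eq_left h1, max_eq_right h2]; ring
        rw [this]
        exact hmem2 x t s hxt
      · refine key _ _ (Or.inr ?_)
        have hmin : min (nbT1 φ m x t s) (m + 2) = nbT1 φ m x t s :=
          min_eq_left (by linarith)
        have hmax : max (-(m + 2)) (nbT1 φ m x t s) = -(m + 2) :=
          max_eq_left (by linarith)
        have ht3 : nbT3 φ m x t s ≤ -(m + 2) := by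
          rw [nbT3, hmin, hmax]
          nlinarith [h2.le]
        rw [lt_abs]
        right
        linarith
    · refine key _ _ (Or.inr ?_)
      have hmin : min (nbT1 φ m x t s) (m + 2) = m + 2 := min_eq_right h1.le
      have hmax : max (-(m + 2)) (m + 2) = m + 2 := max_eq_right (by linarith)
      have ht3 : m + 2 ≤ nbT3 φ m x t s := by
        rw [nbT3, hmin, hmax]
        nlinarith [h1.le]
      rw [lt_abs]
      left
      linarith
  refine ⟨⟨fun q => ⟨nbG h φ m ((q.1 : M × ℝ), q.2),
      hmem3 (q.1 : M × ℝ).1 (q.1 : M × ℝ).2 q.2 q.1.2⟩, ?_⟩, ?_, ?_⟩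
  · exact ((continuous_nbG h φ m).comp
      ((continuous_subtype_val.comp continuous_fst).prodMk continuous_snd)).subtype_mk _
  · intro q
    exact Subtype.ext (nbG_zero h hh0 φ m _)
  · -- compactness of the time-one image
    set L2 := (⇑h) '' (K' ×ˢ (Set.univ : Set I)) with hL2def
    have hL2c : IsCompact L2 := (hK'.prod isCompact_univ).image h.continuous
    set Kc := ((L ∪ L2) ×ˢ Set.Icc (-(m + 2)) (m + 2)) with hKcdef
    have hKcc : IsCompact Kc := (hL.union hL2c).prod isCompact_Icc
    have himg : ∀ z : M × ℝ, nbG h φ m (z, 1) ∈ Kc := by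
      intro z
      have h1 : ((1 : I) : ℝ) = 1 := rfl
      constructor
      · -- first coordinate
        show h (z.1, nbSigma φ m z.1 z.2 1) ∈ L ∪ L2
        by_cases hxK : z.1 ∈ K'
        · exact Or.inr ⟨(z.1, nbSigma φ m z.1 z.2 1), ⟨hxK, trivial⟩, rfl⟩
        · have hφx : φ z.1 = 1 := by
            simpa using hφ1 (fun hmem => hxK (interior_subset hmem))
          have ht1 : m + 2 ≤ nbT1 φ m z.1 z.2 1 := by
            rw [nbT1, h1, hφx]
            rcases le_total (m + 2 - z.2) 0 with hc | hc
            · rw [max_eq_left hc]; linarith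
            · rw [max_eq_right hc]; linarith
          have hψ : nbPsi m (nbT1 φ m z.1 z.2 1) = 1 :=
            nbPsi_of_ge (le_trans ht1 (le_abs_self _))
          have hσ : nbSigma φ m z.1 z.2 1 = 1 := by
            apply Subtype.ext
            show (1 : ℝ) * (nbPsi m (nbT1 φ m z.1 z.2 1) : ℝ) = 1
            rw [hψ]
            norm_num
          rw [hσ]
          exact Or.inl (subset_closure ⟨z.1, rfl⟩)
      · -- second coordinate
        show nbT3 φ m z.1 z.2 1 ∈ Set.Icc (-(m + 2)) (m + 2)
        have : nbT3 φ m z.1 z.2 1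
            = max (-(m + 2)) (min (nbT1 φ m z.1 z.2 1) (m + 2)) := by
          rw [nbT3, h1]; ring
        rw [this]
        constructor
        · exact le_max_left _ _
        · exact max_le (by linarith) (min_le_right _ _)
    have hpre : IsCompact (Subtype.val ⁻¹' Kc : Set ↥N) :=
      hNcl.isClosedEmbedding_subtypeVal.isCompact_preimage hKcc
    have hclKc : IsClosed (Subtype.val ⁻¹' Kc : Set ↥N) :=
      hKcc.isClosed.preimage continuous_subtype_val
    refine hpre.of_isClosed_subset isClosed_closure (closure_minimal ?_ hclKc)
    rintro _ ⟨q, rfl⟩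
    exact himg (q : M × ℝ)




lemma univ_isClean' {X : Type} [TopologicalSpace X] :
    IsCleanNbhdOfInf (Set.univ : Set X) := by
  refine ⟨isClosed_univ, by rw [Set.compl_univ, closure_empty]; exact isCompact_empty, ∅, ?_⟩
  haveI : IsEmpty ↥(frontier (Set.univ : Set X)) := by
    rw [frontier_univ]; exact Set.isEmpty_coe_sort.2 rfl
  refine ⟨⟨Equiv.equivOfIsEmpty _ _, continuous_of_isEmpty' _, continuous_of_isEmpty' _⟩,
    isOpen_empty, by rw [frontier_univ], fun x => isEmptyElim x, ?_⟩
  rw [Set.eq_empty_of_isEmpty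
    ({z : ↥(frontier (Set.univ : Set X)) × ↥(Set.Ioo (-1 : ℝ) 1) | 0 ≤ ((z.2 : ℝ))}),
    Set.image_empty, Set.empty_inter]

lemma fd_of_univ {M : Type} [TopologicalSpace M] [T2Space M]
    (hFD : FinitelyDominated ↥(Set.univ : Set (M × ℝ))) : FinitelyDominated M := by
  obtain ⟨H, hH0, hH1⟩ := hFD
  refine ⟨⟨fun p => ((H (⟨(p.1, 0), Set.mem_univ _⟩, p.2) : M × ℝ)).1, ?_⟩, ?_, ?_⟩
  · exact (continuous_subtype_val.comp (H.continuous.comp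
      (((continuous_fst.prodMk continuous_const).subtype_mk _).prodMk continuous_snd))).fst
  · intro x
    show ((H (⟨(x, 0), Set.mem_univ _⟩, 0) : M × ℝ)).1 = x
    rw [hH0]
  · set g : ↥(Set.univ : Set (M × ℝ)) → M := fun y => (y : M × ℝ).1 with hg
    have hgc : Continuous g := continuous_subtype_val.fst
    have himg : IsCompact (g '' closure (Set.range fun y => H (y, 1))) := hH1.image hgc
    refine himg.of_isClosed_subset isClosed_closure (closure_minimal ?_ himg.isClosed)
    rintro _ ⟨x, rfl⟩
    exact ⟨H (⟨(x, 0), Set.mem_univ _⟩, 1), subset_closure ⟨_, rfl⟩, rfl⟩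


theorem inward_tame_iff_finitely_dominated (n : ℕ) (M : Type) [TopologicalSpace M]
    (hM : IsOpenNManifold n M) (hMconn : ConnectedSpace M) :
    (∀ N : Set (M × ℝ), IsCleanNbhdOfInf N → FinitelyDominated ↥N) ↔
      FinitelyDominated M := by
  constructor
  · intro hclean
    haveI : T2Space M := hM.1
    exact fd_of_univ (hclean Set.univ univ_isClean')
  · intro hFD N hN
    haveI : T2Space M := hM.1
    haveI : WeaklyLocallyCompactSpace M := weaklyLC_of_charts hM.2.2.2
    exact finitelyDominated_of_clean hFD N hN.1 hN.2.1

end
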